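/- Let $p_1,\ldots,p_n$ be distinct primes ($n\geq 3$), $N,N'\in\mathbb{N}$, and let $r_p:\mathbb{Z}[1/p_1,\ldots,1/p_n]^\times\times\mathbb{Z}[1/p_1,\ldots,1/p_n]^\times\to\mathbb{F}_p^\times\times\mathbb{F}_p^\times$ be the reduction map for a prime $p\notin\{p_1,\ldots,p_n\}$. Then $r_p(\Lambda)=r_p(\Lambda')=r_p(\Lambda\cap\Lambda')=r_p(\Lambda\cdot\Lambda')$. -/

import Mathlib

/-!
Everything happens in `C × C` for the cyclic group `C = (ZMod p)ˣ`. For a subgroup `H`, put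
`K₁ = {x | (x, 1) ∈ H}` and `K₂ = {y | (1, y) ∈ H}`. Since `C` is finite cyclic, membership in a
subgroup is decided by the order of the element, so there are coprime `e, f` with `K₁ ^ e ⊆ K₂`
and `K₂ ^ f ⊆ K₁`. If `H` contains the chain `(a₀, 1), (a₁, a₀), …, (a_k, a_{k-1}), (1, a_k)`,
walking down the chain from `a_k ∈ K₂` gives `a₀ ^ (f ^ k) ∈ K₂`, while `a₀ ∈ K₁` gives
`a₀ ^ e ∈ K₂`; hence `a₀ ∈ K₂`, and symmetrically `a_k ∈ K₁`. Thus `(1, v₀ ^ N)` and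
`(v_last ^ N', 1)` already lie in the group generated by the wild generators.
-/

/-- The generators `λ₁ = (u 0, 1)`, `λ_{j+1} = (u j, u (j-1))` for `1 ≤ j ≤ n`,
`λ_{n+2} = (1, u (n))` (indices 0-based, family `u` of size `n+1`). -/
def wildGens {G : Type*} [Group G] {n : ℕ} (u : Fin (n + 1) → G) :
    Fin (n + 2) → G × G := fun j =>
  (if h : (j : ℕ) < n + 1 then u ⟨j, h⟩ else 1,
   if h : 0 < (j : ℕ) then u ⟨(j : ℕ) - 1, by have := j.isLt; omega⟩ else 1)

theorem Subgroup.closure_insert_of_mem {G : Type*} [Group G] {s : Set G} {x : G}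
    (hx : x ∈ Subgroup.closure s) : Subgroup.closure (insert x s) = Subgroup.closure s :=
  le_antisymm ((Subgroup.closure_le _).mpr (Set.insert_subset hx Subgroup.subset_closure))
    (Subgroup.closure_mono (Set.subset_insert x s))

theorem Subgroup.mem_of_pow_mem_of_coprime {G : Type*} [Group G] {K : Subgroup G} {x : G}
    {m n : ℕ} (hmn : m.Coprime n) (hm : x ^ m ∈ K) (hn : x ^ n ∈ K) : x ∈ K := by
  have hx : x = (x ^ m) ^ m.gcdA n * (x ^ n) ^ m.gcdB n := by
    rw [← zpow_natCast, ← zpow_natCast, ← zpow_mul, ← zpow_mul, ← zpow_add, ← Nat.gcd_eq_gcd_ab,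
      hmn.gcd_eq_one, Nat.cast_one, zpow_one]
  rw [hx]
  exact mul_mem (zpow_mem hm _) (zpow_mem hn _)

section Cyclic

variable {C : Type*} [CommGroup C] [IsCyclic C] [Finite C]

theorem IsCyclic.mem_of_pow_natCard_eq_one (K : Subgroup C) {x : C}
    (hx : x ^ Nat.card K = 1) : x ∈ K := by
  have hK : K = (powMonoidHom (Nat.card K)).ker := by
    refine Subgroup.eq_of_le_of_card_ge (fun y hy => ?_) ?_
    · exact MonoidHom.mem_ker.mpr (orderOf_dvd_iff_pow_eq_one.mp (K.orderOf_dvd_natCard hy))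
    · rw [IsCyclic.card_powMonoidHom_ker, Nat.gcd_eq_right K.card_subgroup_dvd_card]
  rw [hK]
  exact hx

theorem IsCyclic.pow_mem_of_natCard_dvd {K L : Subgroup C} {x : C} (hx : x ∈ K) {n : ℕ}
    (hn : Nat.card K ∣ n * Nat.card L) : x ^ n ∈ L := by
  apply IsCyclic.mem_of_pow_natCard_eq_one
  rw [← pow_mul]
  exact orderOf_dvd_iff_pow_eq_one.mp ((K.orderOf_dvd_natCard hx).trans hn)

theorem IsCyclic.exists_coprime_pow_mem (K L : Subgroup C) :
    ∃ e f : ℕ, e.Coprime f ∧ (∀ x ∈ K, x ^ e ∈ L) ∧ ∀ y ∈ L, y ^ f ∈ K := by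
  have hdvd : ∀ a b : ℕ, a ∣ a / a.gcd b * b := fun a b => by
    conv_lhs => rw [← Nat.div_mul_cancel (Nat.gcd_dvd_left a b)]
    exact mul_dvd_mul_left _ (Nat.gcd_dvd_right a b)
  refine ⟨Nat.card K / (Nat.card K).gcd (Nat.card L), Nat.card L / (Nat.card K).gcd (Nat.card L),
    Nat.coprime_div_gcd_div_gcd (Nat.gcd_pos_of_pos_left _ Nat.card_pos),
    fun x hx => IsCyclic.pow_mem_of_natCard_dvd hx (hdvd _ _), fun y hy => ?_⟩
  exact IsCyclic.pow_mem_of_natCard_dvd hy (Nat.gcd_comm (Nat.card L) (Nat.card K) ▸ hdvd _ _)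

end Cyclic

section Chain

variable {G : Type*} [Group G] {H : Subgroup (G × G)} {e f k : ℕ} {a : Fin (k + 1) → G}

theorem one_head_mem_of_chain (hef : e.Coprime f)
    (he : ∀ x, (x, 1) ∈ H → (1, x ^ e) ∈ H) (hf : ∀ y, (1, y) ∈ H → (y ^ f, 1) ∈ H)
    (hhead : (a 0, 1) ∈ H) (hstep : ∀ i : Fin k, (a i.succ, a i.castSucc) ∈ H)
    (hlast : (1, a (Fin.last k)) ∈ H) : (1, a 0) ∈ H := by
  have descend : ∀ i, ∃ r, e.Coprime r ∧ (1, a i ^ r) ∈ H := by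
    refine Fin.reverseInduction ⟨1, Nat.coprime_one_right e, by simpa using hlast⟩ ?_
    rintro i ⟨r, her, hr⟩
    refine ⟨r * f, her.mul_right hef, ?_⟩
    have := div_mem (pow_mem (hstep i) (r * f)) (pow_mul (a i.succ) r f ▸ hf _ hr)
    simpa using this
  obtain ⟨r, her, hr⟩ := descend 0
  exact Subgroup.mem_of_pow_mem_of_coprime (K := H.comap (MonoidHom.inr G G)) her
    (he _ hhead) hr

theorem last_one_mem_of_chain (hef : e.Coprime f)
    (he : ∀ x, (x, 1) ∈ H → (1, x ^ e) ∈ H) (hf : ∀ y, (1, y) ∈ H → (y ^ f, 1) ∈ H)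
    (hhead : (a 0, 1) ∈ H) (hstep : ∀ i : Fin k, (a i.succ, a i.castSucc) ∈ H)
    (hlast : (1, a (Fin.last k)) ∈ H) : (a (Fin.last k), 1) ∈ H := by
  have ascend : ∀ i, ∃ r, f.Coprime r ∧ (a i ^ r, 1) ∈ H := by
    refine Fin.induction ⟨1, Nat.coprime_one_right f, by simpa using hhead⟩ ?_
    rintro i ⟨r, hfr, hr⟩
    refine ⟨r * e, hfr.mul_right hef.symm, ?_⟩
    have := div_mem (pow_mem (hstep i) (r * e)) (pow_mul (a i.castSucc) r e ▸ he _ hr)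
    simpa using this
  obtain ⟨r, hfr, hr⟩ := ascend (Fin.last k)
  exact Subgroup.mem_of_pow_mem_of_coprime (K := H.comap (MonoidHom.inl G G)) hfr
    (hf _ hlast) hr

end Chain

section WildGens

variable {G : Type*} [Group G] {n : ℕ} (u : Fin (n + 1) → G)

theorem wildGens_zero : wildGens u 0 = (u 0, 1) := by
  simp [wildGens]

theorem wildGens_succ_castSucc (i : Fin n) :
    wildGens u i.succ.castSucc = (u i.succ, u i.castSucc) := by
  simp [wildGens, Fin.succ, Fin.castSucc, Fin.castAdd, Fin.castLE]

theorem wildGens_last : wildGens u (Fin.last (n + 1)) = (1, u (Fin.last n)) := by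
  simp [wildGens, Fin.last]

end WildGens

/-- With `v i` in the role of `r_p` of the `i`-th prime, the closures are the reductions of `Λ`,
`Λ'`, `Λ·Λ'` and of the subgroup of `Λ ∩ Λ'` generated by the common generators of `Λ` and `Λ'`. -/
theorem reductions_of_wild_subgroups_eq_general (n : ℕ) (N N' : ℕ)
    (p : ℕ) [Fact p.Prime]
    (v : Fin (n + 3) → (ZMod p)ˣ) :
    Subgroup.closure (insert ((1 : (ZMod p)ˣ), (v 0) ^ N) (Set.range (wildGens v)))
        = Subgroup.closure (Set.range (wildGens v)) ∧
    Subgroup.closure (insert ((v (Fin.last (n + 2))) ^ N', (1 : (ZMod p)ˣ))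
          (Set.range (wildGens v)))
        = Subgroup.closure (Set.range (wildGens v)) ∧
    Subgroup.closure (insert ((1 : (ZMod p)ˣ), (v 0) ^ N)
          (insert ((v (Fin.last (n + 2))) ^ N', (1 : (ZMod p)ˣ))
            (Set.range (wildGens v))))
        = Subgroup.closure (Set.range (wildGens v)) := by
  set Λ := Subgroup.closure (Set.range (wildGens v))
  have hgen : ∀ j, wildGens v j ∈ Λ := fun j => Subgroup.subset_closure (Set.mem_range_self j)
  obtain ⟨e, f, hef, he, hf⟩ :=
    IsCyclic.exists_coprime_pow_mem (Λ.comap (MonoidHom.inl _ _)) (Λ.comap (MonoidHom.inr _ _))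
  have hhead : (v 0, 1) ∈ Λ := wildGens_zero v ▸ hgen 0
  have hstep : ∀ i : Fin (n + 2), (v i.succ, v i.castSucc) ∈ Λ :=
    fun i => wildGens_succ_castSucc v i ▸ hgen _
  have hlast : (1, v (Fin.last (n + 2))) ∈ Λ := wildGens_last v ▸ hgen _
  have h₀ : ((1 : (ZMod p)ˣ), v 0 ^ N) ∈ Λ := by
    simpa using pow_mem (one_head_mem_of_chain hef he hf hhead hstep hlast) N
  have h₁ : (v (Fin.last (n + 2)) ^ N', (1 : (ZMod p)ˣ)) ∈ Λ := by
    simpa using pow_mem (last_one_mem_of_chain hef he hf hhead hstep hlast) N'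
  refine ⟨Subgroup.closure_insert_of_mem h₀, Subgroup.closure_insert_of_mem h₁, ?_⟩
  rw [Subgroup.closure_insert_of_mem (Subgroup.closure_mono (Set.subset_insert _ _) h₀),
    Subgroup.closure_insert_of_mem h₁]

/-- Let `q 0, …, q (n+2)` be distinct primes (family of size `n+3 ≥ 3`),
`N, N' : ℕ`, and `p` a prime different from all of them. Since the reduction map `r_p`
is a homomorphism, `r_p(Λ)`, `r_p(Λ')`, `r_p(Λ ∩ Λ')` and `r_p(Λ·Λ')` are the subgroups
of `(ZMod p)ˣ × (ZMod p)ˣ` generated by the reductions of the corresponding generators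
(`v i` being the reduction of the prime `q i`); the statement is that these four
subgroups coincide. -/
theorem reductions_of_wild_subgroups_eq (n : ℕ) (q : Fin (n + 3) → ℕ)
    (hq : ∀ i, (q i).Prime) (hinj : Function.Injective q) (N N' : ℕ)
    (p : ℕ) [Fact p.Prime] (hp : ∀ i, q i ≠ p)
    (v : Fin (n + 3) → (ZMod p)ˣ) (hv : ∀ i, (v i : ZMod p) = (q i : ZMod p)) :
    Subgroup.closure (insert ((1 : (ZMod p)ˣ), (v 0) ^ N) (Set.range (wildGens v)))
        = Subgroup.closure (Set.range (wildGens v)) ∧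
    Subgroup.closure (insert ((v (Fin.last (n + 2))) ^ N', (1 : (ZMod p)ˣ))
          (Set.range (wildGens v)))
        = Subgroup.closure (Set.range (wildGens v)) ∧
    Subgroup.closure (insert ((1 : (ZMod p)ˣ), (v 0) ^ N)
          (insert ((v (Fin.last (n + 2))) ^ N', (1 : (ZMod p)ˣ))
            (Set.range (wildGens v))))
        = Subgroup.closure (Set.range (wildGens v)) :=
  reductions_of_wild_subgroups_eq_general n N N' p v
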